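/- Let M ≥ 1, let f : D → {0,1} be a partial Boolean function with D ⊆ {0,1}^M, let ε ∈ [0,1/2), and let d ≥ 1 be an integer. Suppose μ : {0,1}^M → ℝ satisfies: μ has pure high degree d, ‖μ‖₁ = 1, and ∑_{x∈D} μ(x)f(x) − ∑_{x∉D} |μ(x)| > ε. Define μ₊(x) = max{0, μ(x)} and μ₋(x) = −min{0, μ(x)}, and let μ₊¹, μ₋⁰ denote the restrictions of μ₊ to f⁻¹(1) and of μ₋ to f⁻¹(0) respectively. Then: (1) μ₊ and μ₋ have disjoint supports; (2) ∑_x μ₊(x)p(x) = ∑_x μ₋(x)p(x) for every real polynomial p of degree at most d, and in particular ‖μ₊‖₁ = ‖μ₋‖₁ = 1/2; (3) ‖μ₊¹‖₁ > ε and ‖μ₋⁰‖₁ > ε; and (4) if additionally μ(x) ≤ 0 for every x ∈ f⁻¹(0) and μ is supported on D, then ‖μ₊¹‖₁ = 1/2. -/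
import Mathlib


open MvPolynomial
open scoped Classical

noncomputable section

/-- The real value of a Boolean: `1` for `true`, `0` for `false`. -/
def bval (b : Bool) : ℝ := if b then 1 else 0

/-- Evaluation of a real multilinear polynomial at a Boolean point of `{0,1}^σ`. -/
def pEval {σ : Type*} (p : MvPolynomial σ ℝ) (x : σ → Bool) : ℝ :=
  MvPolynomial.eval (fun i => bval (x i)) p

/-- `ψ` has pure high degree `d`: it is orthogonal to every polynomial of degree at most `d`. -/
def PureHighDeg {σ : Type*} [Fintype σ] [DecidableEq σ] (d : ℕ)
    (ψ : (σ → Bool) → ℝ) : Prop :=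
  ∀ p : MvPolynomial σ ℝ, p.totalDegree ≤ d → ∑ x : σ → Bool, ψ x * pEval p x = 0

/-- Properties of the positive and negative parts `μ₊ = max(0,μ)` and
`μ₋ = -min(0,μ)` of a dual witness `μ` for `ε`-approximate degree greater than `d`. -/
theorem stmt3 (M : ℕ) (hM : 1 ≤ M) (D : Set (Fin M → Bool)) (f : (Fin M → Bool) → Bool)
    (ε : ℝ) (hε0 : 0 ≤ ε) (hε1 : ε < 1/2) (d : ℕ) (hd : 1 ≤ d)
    (μ : (Fin M → Bool) → ℝ)
    (hphd : PureHighDeg d μ)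
    (hl1 : ∑ x : Fin M → Bool, |μ x| = 1)
    (hcorr : ∑ x : Fin M → Bool, (if x ∈ D then μ x * bval (f x) else -|μ x|) > ε) :
    -- (1) disjoint supports
    (∀ x, max 0 (μ x) = 0 ∨ -min 0 (μ x) = 0) ∧
    -- (2) equal pairings with low-degree polynomials; in particular equal ℓ₁ masses 1/2
    ((∀ p : MvPolynomial (Fin M) ℝ, p.totalDegree ≤ d →
        ∑ x : Fin M → Bool, max 0 (μ x) * pEval p x
          = ∑ x : Fin M → Bool, (-min 0 (μ x)) * pEval p x) ∧
      (∑ x : Fin M → Bool, max 0 (μ x) = 1/2) ∧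
      (∑ x : Fin M → Bool, (-min 0 (μ x)) = 1/2)) ∧
    -- (3) masses on f⁻¹(1) and f⁻¹(0)
    ((∑ x : Fin M → Bool, (if x ∈ D ∧ f x = true then max 0 (μ x) else 0) > ε) ∧
      (∑ x : Fin M → Bool, (if x ∈ D ∧ f x = false then -min 0 (μ x) else 0) > ε)) ∧
    -- (4) one-sided dual witnesses put full positive mass on f⁻¹(1)
    ((∀ x, x ∈ D ∧ f x = false → μ x ≤ 0) → (∀ x, x ∉ D → μ x = 0) →
      ∑ x : Fin M → Bool, (if x ∈ D ∧ f x = true then max 0 (μ x) else 0) = 1/2) := by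
  classical
  -- pointwise facts about max/min parts
  have hPN : ∀ a : ℝ, max 0 a + (-min 0 a) = |a| := by
    intro a
    have h := max_sub_min_eq_abs (0:ℝ) a
    rw [sub_zero] at h
    linarith
  have hPm : ∀ a : ℝ, max 0 a - (-min 0 a) = a := by
    intro a
    have h := max_add_min (0:ℝ) a
    linarith
  have hPpos : ∀ a : ℝ, 0 ≤ max 0 a := fun a => le_max_left 0 a
  have hNpos : ∀ a : ℝ, 0 ≤ -min 0 a := fun a => by
    have := min_le_left (0:ℝ) a; linarith
  -- (2a)
  have h2a : ∀ p : MvPolynomial (Fin M) ℝ, p.totalDegree ≤ d →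
      ∑ x : Fin M → Bool, max 0 (μ x) * pEval p x
        = ∑ x : Fin M → Bool, (-min 0 (μ x)) * pEval p x := by
    intro p hp
    have h := hphd p hp
    have hsub : ∑ x : Fin M → Bool,
        (max 0 (μ x) * pEval p x - (-min 0 (μ x)) * pEval p x)
        = ∑ x : Fin M → Bool, μ x * pEval p x := by
      apply Finset.sum_congr rfl
      intro x _
      linear_combination (pEval p x) * hPm (μ x)
    rw [Finset.sum_sub_distrib, h] at hsub
    linarith
  -- masses are equal, each 1/2
  have hones : ∑ x : Fin M → Bool, max 0 (μ x) = ∑ x : Fin M → Bool, -min 0 (μ x) := by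
    have h := h2a 1 (by rw [MvPolynomial.totalDegree_one]; exact Nat.zero_le d)
    simpa [pEval] using h
  have htot : ∑ x : Fin M → Bool, (max 0 (μ x) + (-min 0 (μ x))) = 1 := by
    rw [← hl1]
    exact Finset.sum_congr rfl fun x _ => hPN (μ x)
  rw [Finset.sum_add_distrib] at htot
  have hPhalf : ∑ x : Fin M → Bool, max 0 (μ x) = 1/2 := by linarith
  have hNhalf : ∑ x : Fin M → Bool, (-min 0 (μ x)) = 1/2 := by linarith
  -- key decomposition of the correlation sum
  have hsplit : ∀ x : Fin M → Bool,
      (if x ∈ D then μ x * bval (f x) else -|μ x|)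
        = ((if x ∈ D ∧ f x = true then max 0 (μ x) else 0)
            - (if x ∈ D ∧ f x = true then -min 0 (μ x) else 0))
          + (-(if x ∉ D then max 0 (μ x) else 0)
            - (if x ∉ D then -min 0 (μ x) else 0)) := by
    intro x
    by_cases hx : x ∈ D
    · cases hf : f x <;> simp [hx, hf, bval] <;> linarith [hPm (μ x)]
    · simp [hx]
      linarith [hPN (μ x)]
  have hkey : ∑ x : Fin M → Bool, (if x ∈ D then μ x * bval (f x) else -|μ x|)
      = (∑ x : Fin M → Bool, (if x ∈ D ∧ f x = true then max 0 (μ x) else 0))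
        - (∑ x : Fin M → Bool, (if x ∈ D ∧ f x = true then -min 0 (μ x) else 0))
        - (∑ x : Fin M → Bool, (if x ∉ D then max 0 (μ x) else 0))
        - (∑ x : Fin M → Bool, (if x ∉ D then -min 0 (μ x) else 0)) := by
    rw [Finset.sum_congr rfl fun x _ => hsplit x, Finset.sum_add_distrib,
      Finset.sum_sub_distrib, Finset.sum_sub_distrib, Finset.sum_neg_distrib]
    ring
  -- nonnegativity of the auxiliary sums
  have hSAnn : (0:ℝ) ≤ ∑ x : Fin M → Bool, (if x ∈ D ∧ f x = true then -min 0 (μ x) else 0) :=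
    Finset.sum_nonneg fun x _ => by
      split
      · exact hNpos _
      · exact le_refl 0
  have hSCPnn : (0:ℝ) ≤ ∑ x : Fin M → Bool, (if x ∉ D then max 0 (μ x) else 0) :=
    Finset.sum_nonneg fun x _ => by
      split
      · exact hPpos _
      · exact le_refl 0
  have hSCNnn : (0:ℝ) ≤ ∑ x : Fin M → Bool, (if x ∉ D then -min 0 (μ x) else 0) :=
    Finset.sum_nonneg fun x _ => by
      split
      · exact hNpos _
      · exact le_refl 0
  -- S1 ≤ 1/2
  have hS1le : ∑ x : Fin M → Bool, (if x ∈ D ∧ f x = true then max 0 (μ x) else 0)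
      ≤ ∑ x : Fin M → Bool, max 0 (μ x) :=
    Finset.sum_le_sum fun x _ => by
      split
      · exact le_refl _
      · exact hPpos _
  -- partition of the negative mass
  have hNpart : ∑ x : Fin M → Bool, (-min 0 (μ x))
      = (∑ x : Fin M → Bool, (if x ∈ D ∧ f x = true then -min 0 (μ x) else 0))
        + (∑ x : Fin M → Bool, (if x ∈ D ∧ f x = false then -min 0 (μ x) else 0))
        + (∑ x : Fin M → Bool, (if x ∉ D then -min 0 (μ x) else 0)) := by
    rw [← Finset.sum_add_distrib, ← Finset.sum_add_distrib]
    apply Finset.sum_congr rfl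
    intro x _
    by_cases hx : x ∈ D
    · cases hf : f x <;> simp [hx, hf]
    · simp [hx]
  have hS1 : ∑ x : Fin M → Bool, (if x ∈ D ∧ f x = true then max 0 (μ x) else 0) > ε := by
    rw [hkey] at hcorr
    linarith
  have hS0 : ∑ x : Fin M → Bool, (if x ∈ D ∧ f x = false then -min 0 (μ x) else 0) > ε := by
    rw [hkey] at hcorr
    linarith
  refine ⟨?_, ⟨h2a, hPhalf, hNhalf⟩, ⟨hS1, hS0⟩, ?_⟩
  · intro x
    rcases le_total (μ x) 0 with h | h
    · left; exact max_eq_left h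
    · right; rw [min_eq_left h]; exact neg_zero
  · intro h1 h2
    rw [← hPhalf]
    apply Finset.sum_congr rfl
    intro x _
    by_cases hx : x ∈ D
    · cases hf : f x
      · have : μ x ≤ 0 := h1 x ⟨hx, hf⟩
        simp [hx, hf, max_eq_left this]
      · simp [hx, hf]
    · have : μ x = 0 := h2 x hx
      simp [hx, this]
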